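/- Under the same hypotheses — E a real inner product space, J : E → ℝ L-smooth with L > 0 and J ≤ J* everywhere, T ≥ 1, step size η = 1/(L√T), θ_0 deterministic, updates θ_{t+1} = θ_t + η·ĝ_t with θ_t 𝔽_t-measurable, E[ĝ_t | 𝔽_t] = ∇J(θ_t) and E[‖ĝ_t − ∇J(θ_t)‖² | 𝔽_t] ≤ σ² almost surely for 0 ≤ t < T — the minimum expected squared gradient norm over the trajectory satisfies min_{0 ≤ t < T} E[‖∇J(θ_t)‖²] ≤ 2LΔ/√T + σ²/√T, where Δ = J* − J(θ_0). -/

import Mathlib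

/-!
`L`-smoothness gives the quadratic lower bound
`J (θ + η • ĝ) ≥ J θ + η ⟪∇J θ, ĝ⟫ - L η² ‖ĝ‖² / 2`. In expectation, unbiasedness turns the
cross term into `E ‖∇J θₜ‖²`, and the Pythagorean decomposition
`E ‖ĝ‖² = E ‖∇J θₜ‖² + E ‖ĝ - ∇J θₜ‖²` bounds the second moment by `E ‖∇J θₜ‖² + σ²`.
Since `L η ≤ 1`, every step gains at least `η/2 · E ‖∇J θₜ‖² - L η² σ² / 2`; telescoping against
`J ≤ J*` and bounding the minimum by the average gives the rate.
-/

open MeasureTheory ProbabilityTheory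
open scoped RealInnerProductSpace

section Smooth

variable {E : Type*} [NormedAddCommGroup E] [InnerProductSpace ℝ E] [CompleteSpace E]
  {J : E → ℝ} {gradJ : E → E} {L : ℝ}

theorem add_inner_sub_sq_le_of_gradient_lipschitz
    (hdiff : ∀ x, HasGradientAt J (gradJ x) x)
    (hlip : ∀ x y, ‖gradJ x - gradJ y‖ ≤ L * ‖x - y‖) (x y : E) :
    J x + ⟪gradJ x, y - x⟫ - L / 2 * ‖y - x‖ ^ 2 ≤ J y := by
  set d := y - x
  let φ : ℝ → ℝ := fun s => J (x + s • d) - s * ⟪gradJ x, d⟫ + L / 2 * s ^ 2 * ‖d‖ ^ 2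
  have hφ' : ∀ s : ℝ, HasDerivAt φ
      (⟪gradJ (x + s • d), d⟫ - ⟪gradJ x, d⟫ + L * s * ‖d‖ ^ 2) s := by
    intro s
    have hline : HasDerivAt (fun s : ℝ => x + s • d) d s := by
      simpa using ((hasDerivAt_id s).smul_const d).const_add x
    have hJ := (hdiff (x + s • d)).hasFDerivAt.comp_hasDerivAt s hline
    simp only [InnerProductSpace.toDual_apply_apply] at hJ
    refine ((hJ.sub ((hasDerivAt_id s).mul_const ⟪gradJ x, d⟫)).add
      (((hasDerivAt_pow 2 s).const_mul (L / 2)).mul_const (‖d‖ ^ 2))).congr_deriv ?_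
    simp only [Nat.cast_ofNat]
    ring
  have hφ'_nonneg : ∀ s ∈ interior (Set.Icc (0 : ℝ) 1),
      0 ≤ ⟪gradJ (x + s • d), d⟫ - ⟪gradJ x, d⟫ + L * s * ‖d‖ ^ 2 := by
    intro s hs
    rw [interior_Icc] at hs
    have hcs : |⟪gradJ (x + s • d) - gradJ x, d⟫| ≤ L * s * ‖d‖ ^ 2 :=
      calc _ ≤ ‖gradJ (x + s • d) - gradJ x‖ * ‖d‖ := abs_real_inner_le_norm _ _
        _ ≤ L * ‖s • d‖ * ‖d‖ := by gcongr; simpa using hlip (x + s • d) x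
        _ = L * s * ‖d‖ ^ 2 := by rw [norm_smul, Real.norm_of_nonneg hs.1.le]; ring
    rw [← inner_sub_left]
    linarith [neg_abs_le ⟪gradJ (x + s • d) - gradJ x, d⟫]
  have hmono : MonotoneOn φ (Set.Icc 0 1) :=
    monotoneOn_of_hasDerivWithinAt_nonneg (convex_Icc 0 1)
      (fun s _ => (hφ' s).continuousAt.continuousWithinAt)
      (fun s _ => (hφ' s).hasDerivWithinAt) hφ'_nonneg
  have h01 := hmono (by simp) (by simp) zero_le_one
  norm_num [φ, d] at h01
  linarith

theorem integrable_comp_of_gradient_lipschitz {Ω : Type*} [MeasurableSpace Ω] {μ : Measure Ω}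
    [IsFiniteMeasure μ] (hdiff : ∀ x, HasGradientAt J (gradJ x) x)
    (hlip : ∀ x y, ‖gradJ x - gradJ y‖ ≤ L * ‖x - y‖) {M : ℝ} (hbound : ∀ x, J x ≤ M)
    {X : Ω → E} (hX : MemLp X 2 μ) :
    Integrable (fun ω => J (X ω)) μ := by
  have hJcont : Continuous J := continuous_iff_continuousAt.2 fun x => (hdiff x).continuousAt
  refine integrable_of_le_of_le (g₁ := fun ω => J 0 + ⟪gradJ 0, X ω⟫ - L / 2 * ‖X ω‖ ^ 2)
    (hJcont.comp_aestronglyMeasurable hX.1)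
    (Filter.Eventually.of_forall fun ω => by
      simpa only [sub_zero] using add_inner_sub_sq_le_of_gradient_lipschitz hdiff hlip 0 (X ω))
    (Filter.Eventually.of_forall fun ω => hbound (X ω)) ?_ (integrable_const M)
  exact ((integrable_const _).add ((hX.integrable one_le_two).const_inner _)).sub
    (hX.norm.integrable_sq.const_mul _)

end Smooth

theorem LipschitzWith.comp_memLp_of_isFiniteMeasure {Ω E F : Type*} [MeasurableSpace Ω]
    {μ : Measure Ω} [IsFiniteMeasure μ] [NormedAddCommGroup E] [NormedAddCommGroup F]
    {p : ENNReal} {K : NNReal} {g : E → F} (hg : LipschitzWith K g) {f : Ω → E}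
    (hf : MemLp f p μ) : MemLp (g ∘ f) p μ := by
  have h := ((hg.sub (LipschitzWith.const (g 0))).comp_memLp (by simp) hf).add (memLp_const (g 0))
  convert h using 1
  ext
  simp

theorem memLp_of_succ_eq_add_smul {Ω E : Type*} [MeasurableSpace Ω] {μ : Measure Ω}
    [NormedAddCommGroup E] [NormedSpace ℝ E] {p : ENNReal} {θ g : ℕ → Ω → E} {η : ℝ}
    (hθ0 : MemLp (θ 0) p μ) (hθsucc : ∀ t ω, θ (t + 1) ω = θ t ω + η • g t ω)
    (hg : ∀ t, MemLp (g t) p μ) (t : ℕ) : MemLp (θ t) p μ := by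
  induction t with
  | zero => exact hθ0
  | succ t ih =>
    rw [show θ (t + 1) = θ t + η • g t from funext (hθsucc t)]
    exact ih.add ((hg t).const_smul η)

section CondExp

variable {Ω : Type*} {m mΩ : MeasurableSpace Ω} {μ : Measure Ω}
  {E : Type*} [NormedAddCommGroup E] [InnerProductSpace ℝ E]

theorem MeasureTheory.MemLp.integrable_inner {X Y : Ω → E} (hX : MemLp X 2 μ)
    (hY : MemLp Y 2 μ) :
    Integrable (fun ω => ⟪X ω, Y ω⟫) μ :=
  (L2.integrable_inner (𝕜 := ℝ) (hX.toLp X) (hY.toLp Y)).congr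
    (by filter_upwards [hX.coeFn_toLp, hY.coeFn_toLp] with ω hXω hYω; rw [hXω, hYω])

theorem integral_le_of_condExp_le [IsProbabilityMeasure μ] (hm : m ≤ mΩ) {f : Ω → ℝ}
    {c : ℝ} (hf : ∀ᵐ ω ∂μ, (μ[f | m]) ω ≤ c) :
    ∫ ω, f ω ∂μ ≤ c := by
  rw [← integral_condExp hm]
  simpa using integral_mono_ae integrable_condExp (integrable_const c) hf

variable [IsFiniteMeasure μ] [CompleteSpace E]

theorem integral_inner_condExp (hm : m ≤ mΩ) {X Y : Ω → E} (hX : MemLp X 2 μ)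
    (hY : MemLp Y 2 μ) (hYm : AEStronglyMeasurable[m] Y μ) :
    ∫ ω, ⟪Y ω, (μ[X | m]) ω⟫ ∂μ = ∫ ω, ⟪Y ω, X ω⟫ ∂μ := by
  have hYm' : AEStronglyMeasurable[m] (hY.toLp Y : Ω → E) μ := hYm.congr hY.coeFn_toLp.symm
  have h := inner_condExpL2_eq_inner_fun (𝕜 := ℝ) hm (hX.toLp X) (hY.toLp Y) hYm'
  rw [L2.inner_def, L2.inner_def] at h
  calc ∫ ω, ⟪Y ω, (μ[X | m]) ω⟫ ∂μ
      = ∫ ω, ⟪(condExpL2 E ℝ hm (hX.toLp X) : Ω → E) ω, (hY.toLp Y : Ω → E) ω⟫ ∂μ := by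
        refine integral_congr_ae ?_
        filter_upwards [hY.coeFn_toLp, hX.condExpL2_ae_eq_condExp (𝕜 := ℝ) hm] with ω hYω hXω
        rw [hYω, hXω, real_inner_comm]
    _ = ∫ ω, ⟪(hX.toLp X : Ω → E) ω, (hY.toLp Y : Ω → E) ω⟫ ∂μ := h
    _ = ∫ ω, ⟪Y ω, X ω⟫ ∂μ := by
        refine integral_congr_ae ?_
        filter_upwards [hY.coeFn_toLp, hX.coeFn_toLp] with ω hYω hXω
        rw [hYω, hXω, real_inner_comm]

theorem integral_inner_eq_integral_norm_sq_of_condExp_eq (hm : m ≤ mΩ) {X Y : Ω → E}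
    (hX : MemLp X 2 μ) (hY : MemLp Y 2 μ) (hYm : AEStronglyMeasurable[m] Y μ)
    (hXY : μ[X | m] =ᵐ[μ] Y) :
    ∫ ω, ⟪Y ω, X ω⟫ ∂μ = ∫ ω, ‖Y ω‖ ^ 2 ∂μ := by
  rw [← integral_inner_condExp hm hX hY hYm]
  refine integral_congr_ae ?_
  filter_upwards [hXY] with ω hω
  rw [hω, real_inner_self_eq_norm_sq]

theorem integral_norm_sq_eq_add_of_condExp_eq (hm : m ≤ mΩ) {X Y : Ω → E}
    (hX : MemLp X 2 μ) (hY : MemLp Y 2 μ) (hYm : AEStronglyMeasurable[m] Y μ)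
    (hXY : μ[X | m] =ᵐ[μ] Y) :
    ∫ ω, ‖X ω‖ ^ 2 ∂μ = ∫ ω, ‖Y ω‖ ^ 2 ∂μ + ∫ ω, ‖X ω - Y ω‖ ^ 2 ∂μ := by
  have hcross := integral_inner_eq_integral_norm_sq_of_condExp_eq hm hX hY hYm hXY
  have hsplit : ∀ ω, ‖X ω‖ ^ 2 = ‖X ω - Y ω‖ ^ 2 + 2 * ⟪Y ω, X ω⟫ - ‖Y ω‖ ^ 2 := fun ω => by
    rw [norm_sub_sq_real, real_inner_comm]; ring
  have hXY2 : Integrable (fun ω => ‖X ω - Y ω‖ ^ 2) μ := (hX.sub hY).norm.integrable_sq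
  have hinner : Integrable (fun ω => 2 * ⟪Y ω, X ω⟫) μ := (hY.integrable_inner hX).const_mul 2
  simp_rw [hsplit]
  rw [integral_sub (f := fun ω => ‖X ω - Y ω‖ ^ 2 + 2 * ⟪Y ω, X ω⟫) (hXY2.add hinner)
    hY.norm.integrable_sq, integral_add hXY2 hinner, integral_const_mul, hcross]
  ring

end CondExp

section Step

variable {Ω : Type*} {m mΩ : MeasurableSpace Ω} {μ : Measure Ω} [IsProbabilityMeasure μ]
  {E : Type*} [NormedAddCommGroup E] [InnerProductSpace ℝ E] [CompleteSpace E]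
  {J : E → ℝ} {gradJ : E → E} {L : ℝ}

theorem integral_add_sub_le_integral_comp_add_smul
    (hdiff : ∀ x, HasGradientAt J (gradJ x) x)
    (hlip : ∀ x y, ‖gradJ x - gradJ y‖ ≤ L * ‖x - y‖) (hL : 0 ≤ L) (hm : m ≤ mΩ)
    {x x' X : Ω → E} {η σ2 : ℝ} (hx : MemLp x 2 μ) (hxm : StronglyMeasurable[m] x)
    (hX : MemLp X 2 μ) (hx' : ∀ ω, x' ω = x ω + η • X ω)
    (hJx : Integrable (fun ω => J (x ω)) μ) (hJx' : Integrable (fun ω => J (x' ω)) μ)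
    (hmean : μ[X | m] =ᵐ[μ] fun ω => gradJ (x ω))
    (hvar : ∀ᵐ ω ∂μ, (μ[fun ω' => ‖X ω' - gradJ (x ω')‖ ^ 2 | m]) ω ≤ σ2) :
    ∫ ω, J (x ω) ∂μ + η * ∫ ω, ‖gradJ (x ω)‖ ^ 2 ∂μ
        - L / 2 * η ^ 2 * (∫ ω, ‖gradJ (x ω)‖ ^ 2 ∂μ + σ2)
      ≤ ∫ ω, J (x' ω) ∂μ := by
  set G : Ω → E := fun ω => gradJ (x ω)
  have hgrad : LipschitzWith L.toNNReal gradJ :=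
    LipschitzWith.of_dist_le' (by simpa only [dist_eq_norm] using hlip)
  have hG : MemLp G 2 μ := hgrad.comp_memLp_of_isFiniteMeasure hx
  have hGm : AEStronglyMeasurable[m] G μ :=
    (hgrad.continuous.comp_stronglyMeasurable hxm).aestronglyMeasurable
  have hpointwise : ∀ ω, J (x ω) + η * ⟪G ω, X ω⟫ - L / 2 * η ^ 2 * ‖X ω‖ ^ 2 ≤ J (x' ω) :=
    fun ω => by
      have h := add_inner_sub_sq_le_of_gradient_lipschitz hdiff hlip (x ω) (x' ω)
      rw [hx', add_sub_cancel_left, inner_smul_right, norm_smul, mul_pow, Real.norm_eq_abs,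
        sq_abs, ← mul_assoc] at h
      rwa [hx']
  have hcross : ∫ ω, ⟪G ω, X ω⟫ ∂μ = ∫ ω, ‖G ω‖ ^ 2 ∂μ :=
    integral_inner_eq_integral_norm_sq_of_condExp_eq hm hX hG hGm hmean
  have hsecond : ∫ ω, ‖X ω‖ ^ 2 ∂μ ≤ ∫ ω, ‖G ω‖ ^ 2 ∂μ + σ2 := by
    rw [integral_norm_sq_eq_add_of_condExp_eq hm hX hG hGm hmean]
    gcongr
    exact integral_le_of_condExp_le hm hvar
  have hinner : Integrable (fun ω => η * ⟪G ω, X ω⟫) μ := (hG.integrable_inner hX).const_mul η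
  have hX2 : Integrable (fun ω => L / 2 * η ^ 2 * ‖X ω‖ ^ 2) μ :=
    hX.norm.integrable_sq.const_mul _
  have hmono : ∫ ω, (J (x ω) + η * ⟪G ω, X ω⟫ - L / 2 * η ^ 2 * ‖X ω‖ ^ 2) ∂μ
      ≤ ∫ ω, J (x' ω) ∂μ :=
    integral_mono ((hJx.add hinner).sub hX2) hJx' hpointwise
  rw [integral_sub (f := fun ω => J (x ω) + η * ⟪G ω, X ω⟫) (hJx.add hinner) hX2,
    integral_add hJx hinner, integral_const_mul, integral_const_mul, hcross] at hmono
  have hc : 0 ≤ L / 2 * η ^ 2 := by positivity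
  linarith [mul_le_mul_of_nonneg_left hsecond hc]

end Step

theorem inf'_le_of_ascent {F A : ℕ → ℝ} {L η σ2 Δ : ℝ} {T : ℕ}
    (hne : (Finset.range T).Nonempty) (hL : 0 < L) (hη : η = 1 / (L * Real.sqrt T))
    (hA : ∀ t, 0 ≤ A t)
    (hstep : ∀ t < T, F t + η * A t - L / 2 * η ^ 2 * (A t + σ2) ≤ F (t + 1))
    (hF : F T - F 0 ≤ Δ) :
    (Finset.range T).inf' hne A ≤ 2 * L * Δ / Real.sqrt T + σ2 / Real.sqrt T := by
  set s := Real.sqrt T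
  have hT : (1 : ℝ) ≤ T :=
    Nat.one_le_cast.2 (Nat.one_le_iff_ne_zero.2 (Finset.nonempty_range_iff.1 hne))
  have hs : 1 ≤ s := Real.one_le_sqrt.2 hT
  have hsq : s ^ 2 = T := Real.sq_sqrt (by linarith)
  have hLη : L * η * s = 1 := by rw [hη]; field_simp
  have hη0 : 0 < η := by rw [hη]; positivity
  have hLη1 : L * η ≤ 1 := by nlinarith
  have hsum : ∑ t ∈ Finset.range T, (η / 2 * A t - L / 2 * η ^ 2 * σ2) ≤ Δ := by
    refine le_trans ?_ ((Finset.sum_range_sub F T).trans_le hF)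
    refine Finset.sum_le_sum fun t ht => ?_
    have := hstep t (Finset.mem_range.1 ht)
    nlinarith [hA t, mul_le_mul_of_nonneg_right hLη1 (mul_nonneg hη0.le (hA t))]
  have hmin : T • (Finset.range T).inf' hne A ≤ ∑ t ∈ Finset.range T, A t := by
    simpa using Finset.card_nsmul_le_sum _ A ((Finset.range T).inf' hne A)
      fun t ht => Finset.inf'_le A ht
  rw [Finset.sum_sub_distrib, ← Finset.mul_sum, Finset.sum_const, Finset.card_range,
    nsmul_eq_mul] at hsum
  rw [nsmul_eq_mul, ← hsq] at hmin
  have hS : ∑ t ∈ Finset.range T, A t ≤ s * (2 * L * Δ + σ2) := by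
    have h := mul_le_mul_of_nonneg_left hsum (by positivity : 0 ≤ 2 * L * s)
    rw [← hsq] at h
    -- `h` is `hsum` scaled by `2 L √T`; simplify with `L η √T = 1`.
    linear_combination h - (∑ t ∈ Finset.range T, A t - s * σ2 * (L * η * s + 1)) * hLη
  rw [← add_div, le_div_iff₀ (by positivity)]
  nlinarith

/-- **Convergence bound of stochastic gradient ascent for L-smooth objectives
(minimum form).** Let `J : E → ℝ` be `L`-smooth (`L > 0`) and bounded above by `J*`,
fix `T ≥ 1` and the step size `η = 1/(L√T)`. Starting from a deterministic `θ₀`, perform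
updates `θ_{t+1} = θ_t + η·ĝ_t`, where each `θ_t` is `𝔽_t`-measurable, each `ĝ_t` is
square-integrable, conditionally unbiased `E[ĝ_t | 𝔽_t] = ∇J(θ_t)`, and has conditional
variance bounded by `σ²` a.s. Then, with `Δ = J* − J(θ₀)`,
`min_{0 ≤ t < T} E[‖∇J(θ_t)‖²] ≤ 2LΔ/√T + σ²/√T`. -/
theorem sgd_convergence_bound_min
    {Ω : Type*} {mΩ : MeasurableSpace Ω} {μ : Measure Ω} [IsProbabilityMeasure μ]
    (ℱ : Filtration ℕ mΩ)
    {E : Type*} [NormedAddCommGroup E] [InnerProductSpace ℝ E] [CompleteSpace E]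
    (J : E → ℝ) (gradJ : E → E) (L : ℝ) (hL : 0 < L)
    (hdiff : ∀ x, HasGradientAt J (gradJ x) x)
    (hlip : ∀ x y, ‖gradJ x - gradJ y‖ ≤ L * ‖x - y‖)
    (Jstar : ℝ) (hbound : ∀ x, J x ≤ Jstar)
    (T : ℕ) (hT : 1 ≤ T)
    (η : ℝ) (hη : η = 1 / (L * Real.sqrt T))
    (θ₀ : E) (θ : ℕ → Ω → E) (g : ℕ → Ω → E) (σ2 : ℝ)
    (hθ0 : θ 0 = fun _ => θ₀)
    (hθsucc : ∀ t ω, θ (t + 1) ω = θ t ω + η • g t ω)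
    (hadapted : ∀ t, StronglyMeasurable[ℱ t] (θ t))
    (hgL2 : ∀ t, MemLp (g t) 2 μ)
    (hmean : ∀ t < T, μ[g t | ℱ t] =ᵐ[μ] fun ω => gradJ (θ t ω))
    (hvar : ∀ t < T,
      ∀ᵐ ω ∂μ, (μ[(fun ω' => ‖g t ω' - gradJ (θ t ω')‖ ^ 2) | ℱ t]) ω ≤ σ2) :
    (Finset.range T).inf' (Finset.nonempty_range_iff.mpr (by omega))
        (fun t => ∫ ω, ‖gradJ (θ t ω)‖ ^ 2 ∂μ)
      ≤ 2 * L * (Jstar - J θ₀) / Real.sqrt T + σ2 / Real.sqrt T := by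
  have hθ : ∀ t, MemLp (θ t) 2 μ :=
    memLp_of_succ_eq_add_smul (by rw [hθ0]; exact memLp_const θ₀) hθsucc hgL2
  have hJθ : ∀ t, Integrable (fun ω => J (θ t ω)) μ := fun t =>
    integrable_comp_of_gradient_lipschitz hdiff hlip hbound (hθ t)
  have hJθT : ∫ ω, J (θ T ω) ∂μ ≤ Jstar := by
    simpa using integral_mono (hJθ T) (integrable_const Jstar) fun ω => hbound (θ T ω)
  refine inf'_le_of_ascent (F := fun t => ∫ ω, J (θ t ω) ∂μ) _ hL hη
    (fun t => integral_nonneg fun ω => by positivity)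
    (fun t ht => integral_add_sub_le_integral_comp_add_smul hdiff hlip hL.le (ℱ.le t) (hθ t)
      (hadapted t) (hgL2 t) (hθsucc t) (hJθ t) (hJθ (t + 1)) (hmean t ht) (hvar t ht)) ?_
  simpa [hθ0] using hJθT
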